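/- Let G be a countable group acting on a measurable space X in which singletons are measurable and for every g ∈ G the map x ↦ g·x is measurable, let μ be a probability measure on G, and let ν be a μ-stationary probability measure on X. If x ∈ X is a point whose orbit {g·x : g ∈ gr(μ)} under the subgroup gr(μ) generated by the support of μ is infinite, then ν({x}) = 0. -/

import Mathlib

open MeasureTheory
open scoped Pointwise ENNReal

/-!
The function `y ↦ ν {y}` is harmonic for the reversed random walk:
`ν {y} = ∑' g, μ {g} * ν {g⁻¹ • y}`. If `ν {x} > 0`, only finitely many atoms weigh at least
`ν {x}`, so `y ↦ ν {y}` attains its maximum `m` on the orbit of `x`, and the finite set `M` of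
orbit points of mass `m` is nonempty. By the maximum principle `M` is mapped into itself by
`g⁻¹` for every `g` in the support of `μ`; since `M` is finite, `g⁻¹` permutes it, so `M` is
invariant under the whole subgroup `gr(μ)`. Hence the orbit lies in `M` and is finite.
-/

lemma ENNReal.eq_of_le_of_tsum_mul_eq {ι : Type*} {p a : ι → ℝ≥0∞} {m : ℝ≥0∞}
    (hp : ∑' i, p i = 1) (hm : m ≠ ∞) (ha : ∀ i, p i ≠ 0 → a i ≤ m)
    (hsum : ∑' i, p i * a i = m) {i : ι} (hi : p i ≠ 0) : a i = m := by
  refine (ha i hi).antisymm (not_lt.1 fun hlt => lt_irrefl m ?_)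
  have hle : ∀ j, p j * a j ≤ p j * m := fun j => by
    rcases eq_or_ne (p j) 0 with h | h
    · simp [h]
    · exact mul_le_mul_right (ha j h) _
  have hpi : p i ≠ ∞ := ne_top_of_le_ne_top one_ne_top (hp ▸ ENNReal.le_tsum i)
  calc m = ∑' j, p j * a j := hsum.symm
    _ < ∑' j, p j * m :=
      ENNReal.tsum_lt_tsum (hsum ▸ hm) hle ((ENNReal.mul_lt_mul_iff_right hi hpi).2 hlt)
    _ = m := by rw [ENNReal.tsum_mul_right, hp, one_mul]

lemma exists_isMaxOn_of_finite_setOf_le {α β : Type*} [LinearOrder β] {f : α → β} {s : Set α}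
    {x : α} (hx : x ∈ s) (hfin : {y | f x ≤ f y}.Finite) : ∃ y ∈ s, IsMaxOn f s y := by
  obtain ⟨y, ⟨hys, hxy⟩, hmax⟩ :=
    Set.exists_max_image (s ∩ {y | f x ≤ f y}) f (hfin.subset Set.inter_subset_right)
      ⟨x, hx, le_rfl⟩
  refine ⟨y, hys, fun z hz => ?_⟩
  rcases le_total (f x) (f z) with hxz | hzx
  · exact hmax z ⟨hz, hxz⟩
  · exact hzx.trans hxy

lemma Set.Finite.smul_set_eq_of_smul_set_subset {G X : Type*} [Group G] [MulAction G X]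
    {s : Set X} (hs : s.Finite) {g : G} (h : g • s ⊆ s) : g • s = s :=
  Set.eq_of_subset_of_ncard_le h (Set.ncard_smul_set g s).ge hs

lemma Set.Finite.closure_le_stabilizer {G X : Type*} [Group G] [MulAction G X] {S : Set G}
    {s : Set X} (hs : s.Finite) (h : ∀ g ∈ S, g⁻¹ • s ⊆ s) :
    Subgroup.closure S ≤ MulAction.stabilizer G s :=
  (Subgroup.closure_le _).2 fun g hg => inv_mem_iff.1 (hs.smul_set_eq_of_smul_set_subset (h g hg))

namespace Subgroup

variable {G X : Type*} [Group G] [MulAction G X] {H : Subgroup G} {x : X}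

lemma smul_mem_image_smul {h : G} (hh : h ∈ H) {y : X}
    (hy : y ∈ (fun g : G => g • x) '' (H : Set G)) :
    h • y ∈ (fun g : G => g • x) '' (H : Set G) := by
  obtain ⟨k, hk, rfl⟩ := hy
  exact ⟨h * k, mul_mem hh hk, mul_smul h k x⟩

lemma image_smul_subset_of_le_stabilizer {s : Set X} (hs : H ≤ MulAction.stabilizer G s)
    {h₀ : G} (hh₀ : h₀ ∈ H) (hx : h₀ • x ∈ s) : (fun g : G => g • x) '' (H : Set G) ⊆ s := by
  rintro _ ⟨h, hh, rfl⟩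
  have hmem := Set.smul_mem_smul_set (a := h * h₀⁻¹) hx
  rwa [MulAction.mem_stabilizer_iff.1 (hs (mul_mem hh (inv_mem hh₀))), smul_smul,
    inv_mul_cancel_right] at hmem

end Subgroup

namespace MeasureTheory

lemma tsum_measure_singleton_eq_one {G : Type*} [Countable G] [MeasurableSpace G]
    [MeasurableSingletonClass G] (μ : Measure G) [IsProbabilityMeasure μ] :
    ∑' g, μ {g} = 1 := by
  rw [← measure_iUnion (by simp [Pairwise]) fun _ => .singleton _,
    Set.iUnion_singleton_eq_range, Set.range_id', measure_univ]

lemma finite_setOf_le_measure_singleton {X : Type*} [MeasurableSpace X]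
    [MeasurableSingletonClass X] (ν : Measure X) [IsFiniteMeasure ν] {ε : ℝ≥0∞} (hε : ε ≠ 0) :
    {y | ε ≤ ν {y}}.Finite :=
  Measure.finite_const_le_meas_of_disjoint_iUnion ν (pos_iff_ne_zero.2 hε)
    (fun y => .singleton y) (fun _ _ h => by simpa using h) (measure_ne_top ν _)

section Stationary

variable {G X : Type*} [Group G] [MeasurableSpace G] [MeasurableSpace X] [MulAction G X]

def IsStationary (μ : Measure G) (ν : Measure X) : Prop :=
  ∀ A : Set X, MeasurableSet A → ν A = ∑' g : G, μ {g} * ν ((fun x => g • x) ⁻¹' A)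

variable {μ : Measure G} {ν : Measure X}

lemma IsStationary.measure_singleton_eq_tsum [MeasurableSingletonClass X]
    (hstat : IsStationary μ ν) (y : X) : ν {y} = ∑' g : G, μ {g} * ν {g⁻¹ • y} := by
  simpa only [Set.preimage_smul, Set.smul_set_singleton] using hstat {y} (.singleton y)

lemma IsStationary.measure_singleton_inv_smul_eq_of_isMaxOn [Countable G]
    [MeasurableSingletonClass G] [MeasurableSingletonClass X] [IsProbabilityMeasure μ]
    [IsFiniteMeasure ν] (hstat : IsStationary μ ν) {O : Set X}
    (hO : ∀ g : G, 0 < μ {g} → ∀ y ∈ O, g⁻¹ • y ∈ O) {y : X} (hy : y ∈ O)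
    (hmax : IsMaxOn (fun z => ν {z}) O y) {g : G} (hg : 0 < μ {g}) :
    ν {g⁻¹ • y} = ν {y} :=
  ENNReal.eq_of_le_of_tsum_mul_eq (tsum_measure_singleton_eq_one μ) (measure_ne_top ν _)
    (fun h hh => hmax (hO h (pos_iff_ne_zero.2 hh) y hy))
    (hstat.measure_singleton_eq_tsum y).symm hg.ne'

end Stationary

end MeasureTheory

theorem stationary_measure_atom_zero_of_infinite_orbit_general
    {G X : Type*} [Group G] [Countable G] [MeasurableSpace G] [DiscreteMeasurableSpace G]
    [MeasurableSpace X] [MeasurableSingletonClass X] [MulAction G X]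
    (μ : Measure G) [IsProbabilityMeasure μ]
    (ν : Measure X) [IsProbabilityMeasure ν]
    (hstat : ∀ A : Set X, MeasurableSet A →
      ν A = ∑' g : G, μ {g} * ν ((fun x => g • x) ⁻¹' A))
    (x : X)
    (hinf : Set.Infinite
      ((fun g : G => g • x) '' (Subgroup.closure {g : G | 0 < μ {g}} : Set G))) :
    ν {x} = 0 := by
  set H := Subgroup.closure {g : G | 0 < μ {g}}
  set O := (fun g : G => g • x) '' (H : Set G)
  by_contra hx
  have hxO : x ∈ O := ⟨1, one_mem H, one_smul G x⟩
  have hOinv : ∀ g : G, 0 < μ {g} → ∀ y ∈ O, g⁻¹ • y ∈ O := fun g hg _ =>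
    H.smul_mem_image_smul (inv_mem (Subgroup.subset_closure hg))
  obtain ⟨y₀, hy₀O, hy₀max⟩ := exists_isMaxOn_of_finite_setOf_le (f := fun y => ν {y}) hxO
    (finite_setOf_le_measure_singleton ν hx)
  set M := {y ∈ O | ν {y} = ν {y₀}}
  have hMfin : M.Finite := (finite_setOf_le_measure_singleton ν hx).subset fun y hy =>
    (hy₀max hxO).trans_eq hy.2.symm
  have hHM : H ≤ MulAction.stabilizer G M := hMfin.closure_le_stabilizer <| by
    rintro g hg _ ⟨y, ⟨hyO, hy⟩, rfl⟩
    have hymax : IsMaxOn (fun z => ν {z}) O y := fun z hz => (hy₀max hz).trans_eq hy.symm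
    exact ⟨hOinv g hg y hyO, (IsStationary.measure_singleton_inv_smul_eq_of_isMaxOn hstat
      hOinv hyO hymax hg).trans hy⟩
  have hy₀M : y₀ ∈ M := ⟨hy₀O, rfl⟩
  obtain ⟨h₀, hh₀, rfl⟩ := hy₀O
  exact hinf (hMfin.subset (H.image_smul_subset_of_le_stabilizer hHM hh₀ hy₀M))

/-- A `μ`-stationary probability measure on a measurable `G`-space with measurable singletons
gives measure zero to every point whose orbit under the subgroup generated by the support
of `μ` is infinite. -/
theorem stationary_measure_atom_zero_of_infinite_orbit
    {G X : Type*} [Group G] [Countable G] [MeasurableSpace G] [DiscreteMeasurableSpace G]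
    [MeasurableSpace X] [MeasurableSingletonClass X] [MulAction G X]
    (hmeas : ∀ g : G, Measurable fun x : X => g • x)
    (μ : Measure G) [IsProbabilityMeasure μ]
    (ν : Measure X) [IsProbabilityMeasure ν]
    (hstat : ∀ A : Set X, MeasurableSet A →
      ν A = ∑' g : G, μ {g} * ν ((fun x => g • x) ⁻¹' A))
    (x : X)
    (hinf : Set.Infinite
      ((fun g : G => g • x) '' (Subgroup.closure {g : G | 0 < μ {g}} : Set G))) :
    ν {x} = 0 :=
  stationary_measure_atom_zero_of_infinite_orbit_general μ ν hstat x hinf
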